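/- Let m ≥ 1, n ≥ 3, N ≥ 1 be integers, and let p* denote the uniform probability vector with p*_{i,j} = 1/((1+m)(1+n)) for all i, j. Then for every vector p = (p_{i,j}) of positive reals summing to 1, Δ_p(N, 1) ≤ Δ_{p*}(N, 1); that is, the risk difference Δ_p(N, 1) is maximized over the simplex at p = p*. -/

import Mathlib

open Finset

/-- Binomial(N, q) probability mass function at `x`. -/
noncomputable def binPMF (N : ℕ) (q : ℝ) (x : ℕ) : ℝ :=
  (N.choose x : ℝ) * q ^ x * (1 - q) ^ (N - x)

/-- The entropy loss `L(d, p) = ∑ᵢ ∑ⱼ pᵢⱼ log (pᵢⱼ / dᵢⱼ)`. -/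
noncomputable def entropyLoss {m n : ℕ} (d p : Fin (m+1) → Fin (n+1) → ℝ) : ℝ :=
  ∑ i, ∑ j, p i j * Real.log (p i j / d i j)

/-- Support of the Multinomial(N, p) distribution on (1+m)(1+n) cells. -/
def suppX (m n N : ℕ) : Finset (Fin (m+1) → Fin (n+1) → Fin (N+1)) :=
  Finset.univ.filter fun x => ∑ i, ∑ j, (x i j : ℕ) = N

/-- Support of the Multinomial(N', p·) distribution on 1+m cells. -/
def suppY (m N' : ℕ) : Finset (Fin (m+1) → Fin (N'+1)) :=
  Finset.univ.filter fun y => ∑ i, (y i : ℕ) = N'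

/-- Multinomial(N, p) probability of the outcome `x`. -/
noncomputable def wX {m n N : ℕ} (p : Fin (m+1) → Fin (n+1) → ℝ)
    (x : Fin (m+1) → Fin (n+1) → Fin (N+1)) : ℝ :=
  (Nat.multinomial Finset.univ (fun k : Fin (m+1) × Fin (n+1) => (x k.1 k.2 : ℕ)) : ℝ) *
    ∏ i, ∏ j, p i j ^ (x i j : ℕ)

/-- Multinomial(N', (pᵢ.)ᵢ) probability of the outcome `y`, where `pᵢ. = ∑ⱼ pᵢⱼ`. -/
noncomputable def wY {m n N' : ℕ} (p : Fin (m+1) → Fin (n+1) → ℝ)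
    (y : Fin (m+1) → Fin (N'+1)) : ℝ :=
  (Nat.multinomial Finset.univ (fun i => (y i : ℕ)) : ℝ) *
    ∏ i, (∑ j, p i j) ^ (y i : ℕ)

/-- The estimator `p̃` based on the direct observations only. -/
noncomputable def ptilde {m n N : ℕ} (x : Fin (m+1) → Fin (n+1) → Fin (N+1)) :
    Fin (m+1) → Fin (n+1) → ℝ :=
  fun i j => ((x i j : ℝ) + 1/2) / ((N : ℝ) + (1 + m) * (1 + n) / 2)

/-- The estimator `p̂` based on the direct and aggregated observations. -/
noncomputable def phat {m n N N' : ℕ} (x : Fin (m+1) → Fin (n+1) → Fin (N+1))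
    (y : Fin (m+1) → Fin (N'+1)) : Fin (m+1) → Fin (n+1) → ℝ :=
  fun i j =>
    ((((∑ j', (x i j' : ℕ)) : ℕ) : ℝ) + (y i : ℝ) + (1 + n) / 2) /
        ((N : ℝ) + (N' : ℝ) + (1 + m) * (1 + n) / 2) *
      (((x i j : ℝ) + 1/2) / ((((∑ j', (x i j' : ℕ)) : ℕ) : ℝ) + (1 + n) / 2))

/-- The risk difference `Δ_p(N, N') = E_p[L(p̂, p)] − E_p[L(p̃, p)]`, the expectation being
a finite sum over the supports of the independent multinomial observations. -/
noncomputable def riskDiff (m n : ℕ) (p : Fin (m+1) → Fin (n+1) → ℝ) (N N' : ℕ) : ℝ :=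
  ∑ x ∈ suppX m n N, ∑ y ∈ suppY m N',
    wX p x * wY p y * (entropyLoss (phat x y) p - entropyLoss (ptilde x) p)

/-!
Averaging out the single aggregated observation, and then the cells outside a row, turns the
risk difference into `Δ_p(N, 1) = K - ∑ᵢ pᵢ² E[ℓ(Sᵢ)]` with `Sᵢ ~ Bin(N, pᵢ)` for the row
marginals `pᵢ`, `ℓ(s) = log (s + 1 + a) - log (s + a)`, `a = (1 + n)/2` and a constant `K`.
Since `(N+2)(N+1) q² b_{N,s}(q) = (s+2)(s+1) b_{N+2,s+2}(q)` for the Bernstein basis, the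
function `q ↦ q² E[ℓ(S)]`, `S ~ Bin(N, q)`, is up to the factor `(N+2)(N+1)` the Bernstein
polynomial of degree `N + 2` of the sequence `z ↦ z(z-1) ℓ(z-2)`. For `n ≥ 3` this sequence is
convex: it is sampled from `t ↦ (t² - t) log ((t + c)/(t + c - 1))`, `c = (n-1)/2`, which is
convex on `[1, ∞)`. Bernstein polynomials of convex sequences are convex on `[0, 1]`, so
Jensen's inequality over the marginals `pᵢ`, whose mean is `1/(1+m)`, gives the claim.
-/

open Polynomial Real

lemma binPMF_nonneg (M : ℕ) {q : ℝ} (hq : q ∈ Set.Icc 0 1) (z : ℕ) : 0 ≤ binPMF M q z := by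
  have := hq.1
  have := sub_nonneg.2 hq.2
  unfold binPMF
  positivity

lemma sum_binPMF (N : ℕ) (q : ℝ) : ∑ s ∈ range (N + 1), binPMF N q s = 1 := by
  calc ∑ s ∈ range (N + 1), binPMF N q s = (q + (1 - q)) ^ N := by
        rw [add_pow]
        exact sum_congr rfl fun s _ => by rw [binPMF]; ring
    _ = 1 := by simp

lemma sq_mul_sum_binPMF_eq (N : ℕ) (q : ℝ) {g h : ℕ → ℝ} (h0 : h 0 = 0) (h1 : h 1 = 0)
    (hgh : ∀ s, h (s + 2) = (s + 2) * (s + 1) * g s) :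
    (N + 2) * (N + 1) * (q ^ 2 * ∑ s ∈ range (N + 1), binPMF N q s * g s) =
      ∑ z ∈ range (N + 2 + 1), binPMF (N + 2) q z * h z := by
  rw [sum_range_succ' _ (N + 2), sum_range_succ' _ (N + 1), h0, h1, mul_zero, mul_zero,
    add_zero, add_zero, mul_sum, mul_sum]
  refine sum_congr rfl fun s _ => ?_
  have hchoose : ((N + 2) * (N + 1) * N.choose s : ℝ) =
      (N + 2).choose (s + 2) * ((s + 2) * (s + 1)) := by
    have h1 : ((N + 2) * (N + 1).choose (s + 1) : ℝ) = (N + 2).choose (s + 2) * (s + 2) := by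
      exact_mod_cast Nat.add_one_mul_choose_eq (N + 1) (s + 1)
    have h2 : ((N + 1) * N.choose s : ℝ) = (N + 1).choose (s + 1) * (s + 1) := by
      exact_mod_cast Nat.add_one_mul_choose_eq N s
    linear_combination (N + 2 : ℝ) * h2 + (s + 1 : ℝ) * h1
  rw [hgh, binPMF, binPMF, show N + 2 - (s + 2) = N - s by omega]
  linear_combination (q ^ (s + 2) * (1 - q) ^ (N - s) * g s) * hchoose

noncomputable def bernsteinSum (M : ℕ) (f : ℕ → ℝ) : ℝ[X] :=
  ∑ z ∈ range (M + 1), f z • bernsteinPolynomial ℝ M z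

lemma eval_bernsteinSum (M : ℕ) (f : ℕ → ℝ) (q : ℝ) :
    (bernsteinSum M f).eval q = ∑ z ∈ range (M + 1), binPMF M q z * f z := by
  simp [bernsteinSum, eval_finsetSum, bernsteinPolynomial, binPMF, mul_comm]

lemma eval_bernsteinSum_nonneg {M : ℕ} {f : ℕ → ℝ} (hf : ∀ z ≤ M, 0 ≤ f z) {q : ℝ}
    (hq : q ∈ Set.Icc 0 1) : 0 ≤ (bernsteinSum M f).eval q := by
  rw [eval_bernsteinSum]
  exact sum_nonneg fun z hz =>
    mul_nonneg (binPMF_nonneg M hq z) (hf z (Nat.lt_succ_iff.1 (mem_range.1 hz)))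

lemma derivative_bernsteinSum (M : ℕ) (f : ℕ → ℝ) :
    derivative (bernsteinSum (M + 1) f) =
      (M + 1 : ℝ[X]) * bernsteinSum M (fun z => f (z + 1) - f z) := by
  have hshift : ∑ z ∈ range (M + 1), f z • bernsteinPolynomial ℝ M z =
      ∑ z ∈ range (M + 1), f (z + 1) • bernsteinPolynomial ℝ M (z + 1) +
        f 0 • bernsteinPolynomial ℝ M 0 := by
    rw [← sum_range_succ' (fun z => f z • bernsteinPolynomial ℝ M z), sum_range_succ _ (M + 1),
      bernsteinPolynomial.eq_zero_of_lt ℝ (Nat.lt_succ_self M), smul_zero, add_zero]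
  have hterm (z : ℕ) : f (z + 1) • derivative (bernsteinPolynomial ℝ (M + 1) (z + 1)) =
      (M + 1 : ℝ[X]) * (f (z + 1) • bernsteinPolynomial ℝ M z) -
        (M + 1 : ℝ[X]) * (f (z + 1) • bernsteinPolynomial ℝ M (z + 1)) := by
    simp only [bernsteinPolynomial.derivative_succ, add_tsub_cancel_right, smul_eq_C_mul]
    push_cast
    ring
  simp only [bernsteinSum, derivative_sum, derivative_smul, sub_smul, sum_sub_distrib]
  rw [sum_range_succ' _ (M + 1), hshift]
  simp only [hterm, sum_sub_distrib, ← mul_sum, bernsteinPolynomial.derivative_zero,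
    add_tsub_cancel_right, smul_eq_C_mul]
  push_cast
  ring

lemma convexOn_eval_bernsteinSum (M : ℕ) (f : ℕ → ℝ)
    (hf : ∀ z ≤ M, 2 * f (z + 1) ≤ f z + f (z + 2)) :
    ConvexOn ℝ (Set.Icc 0 1) fun q => (bernsteinSum (M + 2) f).eval q := by
  have hsecond : derivative (derivative (bernsteinSum (M + 2) f)) =
      ((M + 2) * (M + 1) : ℝ[X]) *
        bernsteinSum M (fun z => f (z + 1 + 1) - f (z + 1) - (f (z + 1) - f z)) := by
    rw [derivative_bernsteinSum, ← Nat.cast_succ, derivative_natCast_mul, derivative_bernsteinSum]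
    push_cast
    ring
  refine convexOn_of_hasDerivWithinAt2_nonneg (convex_Icc 0 1) (Polynomial.continuousOn _)
    (fun q _ => (Polynomial.hasDerivAt _ q).hasDerivWithinAt)
    (fun q _ => (Polynomial.hasDerivAt _ q).hasDerivWithinAt) fun q hq => ?_
  rw [hsecond, eval_mul]
  refine mul_nonneg ?_ (eval_bernsteinSum_nonneg (fun z hz => ?_) (interior_subset hq))
  · simp only [eval_mul, eval_add, eval_natCast, eval_ofNat, eval_one]
    positivity
  · linarith [hf z hz]

lemma two_div_le_log_sub_log_sub_one {s : ℝ} (hs : 1 < s) :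
    2 / (2 * s - 1) ≤ log s - log (s - 1) := by
  have hs1 : s - 1 ≠ 0 := by linarith
  have hsum := hasSum_log_one_add_inv (sub_pos.2 hs)
  rw [show 1 + (s - 1)⁻¹ = s / (s - 1) by field_simp; ring, log_div (by linarith) hs1] at hsum
  refine le_trans (le_of_eq ?_) (le_hasSum hsum 0 fun k _ => by positivity)
  norm_num
  ring

lemma hasDerivAt_log_sub_log_sub_one {s : ℝ} (hs : 1 < s) :
    HasDerivAt (fun s => log s - log (s - 1)) (1 / s - 1 / (s - 1)) s := by
  simpa using (hasDerivAt_log (by linarith : s ≠ 0)).fun_sub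
    (((hasDerivAt_id s).sub_const 1).log (sub_ne_zero.2 hs.ne'))

lemma hasDerivAt_inv_sub_inv_sub_one {s : ℝ} (hs : 1 < s) :
    HasDerivAt (fun s => 1 / s - 1 / (s - 1)) (1 / (s - 1) ^ 2 - 1 / s ^ 2) s := by
  simp only [one_div]
  refine ((hasDerivAt_inv (by linarith : s ≠ 0)).fun_sub
    (((hasDerivAt_id' s).sub_const 1).fun_inv (sub_ne_zero.2 hs.ne'))).congr_deriv ?_
  ring

noncomputable def fallingLogGap (c t : ℝ) : ℝ :=
  (t ^ 2 - t) * (log (t + c) - log (t + c - 1))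

lemma convexOn_fallingLogGap {c : ℝ} (hc : 1 ≤ c) :
    ConvexOn ℝ (Set.Ici 1) (fallingLogGap c) := by
  have hshift {t : ℝ} (ht : 1 ≤ t) : 1 < t + c := by linarith
  have hℓ {t : ℝ} (ht : 1 ≤ t) :=
    (hasDerivAt_log_sub_log_sub_one (hshift ht)).comp_add_const t c
  have hℓ' {t : ℝ} (ht : 1 ≤ t) :=
    (hasDerivAt_inv_sub_inv_sub_one (hshift ht)).comp_add_const t c
  have hquad (t : ℝ) : HasDerivAt (fun t : ℝ => t ^ 2 - t) (2 * t - 1) t := by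
    simpa using (hasDerivAt_pow 2 t).fun_sub (hasDerivAt_id' t)
  have hlin (t : ℝ) : HasDerivAt (fun t : ℝ => 2 * t - 1) 2 t := by
    simpa using ((hasDerivAt_id t).const_mul 2).sub_const 1
  have hd1 {t : ℝ} (ht : 1 ≤ t) : HasDerivAt (fallingLogGap c)
      ((2 * t - 1) * (log (t + c) - log (t + c - 1)) +
        (t ^ 2 - t) * (1 / (t + c) - 1 / (t + c - 1))) t :=
    (hquad t).fun_mul (hℓ ht)
  have hd2 {t : ℝ} (ht : 1 ≤ t) : HasDerivAt
      (fun t => (2 * t - 1) * (log (t + c) - log (t + c - 1)) +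
        (t ^ 2 - t) * (1 / (t + c) - 1 / (t + c - 1)))
      (2 * (log (t + c) - log (t + c - 1)) + 2 * (2 * t - 1) * (1 / (t + c) - 1 / (t + c - 1)) +
        (t ^ 2 - t) * (1 / (t + c - 1) ^ 2 - 1 / (t + c) ^ 2)) t := by
    refine (((hlin t).fun_mul (hℓ ht)).fun_add ((hquad t).fun_mul (hℓ' ht))).congr_deriv ?_
    ring
  refine convexOn_of_hasDerivWithinAt2_nonneg (convex_Ici 1)
    (fun t ht => (hd1 ht).continuousAt.continuousWithinAt)
    (fun t ht => (hd1 (interior_subset ht)).hasDerivWithinAt)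
    (fun t ht => (hd2 (interior_subset ht)).hasDerivWithinAt) fun t ht => ?_
  rw [interior_Ici, Set.mem_Ioi] at ht
  set s := t + c with hs
  have hs1 : 1 < s := by linarith
  -- In terms of `t` and `c` this is `2c(c-1)(2c²-1) + t(8c³-4c²-4c+1) + t²(4c²-1)`.
  have hnum : 0 ≤ 4 * s ^ 2 * (s - 1) ^ 2 - 2 * (2 * t - 1) * s * (s - 1) * (2 * s - 1) +
      (t ^ 2 - t) * (2 * s - 1) ^ 2 := by
    rw [hs]
    nlinarith [sq_nonneg (t - 1), sq_nonneg (c - 1), sq_nonneg (t * c - 1), sq_nonneg c,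
      sq_nonneg t, sq_nonneg (t + c - 2), mul_nonneg (sub_nonneg.2 ht.le) (sub_nonneg.2 hc)]
  have hlower : 0 ≤ 2 * (2 / (2 * s - 1)) + 2 * (2 * t - 1) * (1 / s - 1 / (s - 1)) +
      (t ^ 2 - t) * (1 / (s - 1) ^ 2 - 1 / s ^ 2) := by
    have h1 : s - 1 ≠ 0 := by linarith
    have h2 : 0 < 2 * s - 1 := by linarith
    rw [show 2 * (2 / (2 * s - 1)) + 2 * (2 * t - 1) * (1 / s - 1 / (s - 1)) +
        (t ^ 2 - t) * (1 / (s - 1) ^ 2 - 1 / s ^ 2) =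
        (4 * s ^ 2 * (s - 1) ^ 2 - 2 * (2 * t - 1) * s * (s - 1) * (2 * s - 1) +
          (t ^ 2 - t) * (2 * s - 1) ^ 2) / (s ^ 2 * (s - 1) ^ 2 * (2 * s - 1)) by
      field_simp; ring]
    positivity
  linarith [two_div_le_log_sub_log_sub_one hs1]

lemma two_mul_fallingLogGap_succ_le {c : ℝ} (hc : 1 ≤ c) (z : ℕ) :
    2 * fallingLogGap c (z + 1) ≤ fallingLogGap c z + fallingLogGap c (z + 2) := by
  rcases Nat.eq_zero_or_pos z with rfl | hz
  · have : log (2 + c - 1) ≤ log (2 + c) := log_le_log (by linarith) (by linarith)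
    norm_num [fallingLogGap]
    linarith
  · have hz1 : (1 : ℝ) ≤ z := by exact_mod_cast hz
    have := (convexOn_fallingLogGap hc).2 (Set.mem_Ici.2 hz1)
      (Set.mem_Ici.2 (by linarith : (1 : ℝ) ≤ z + 2))
      (by norm_num : (0 : ℝ) ≤ 1 / 2) (by norm_num : (0 : ℝ) ≤ 1 / 2) (by norm_num)
    simp only [smul_eq_mul, show 1 / 2 * (z : ℝ) + 1 / 2 * (z + 2) = z + 1 by ring] at this
    linarith

lemma sq_mul_sum_binPMF_log_sub_log (n N : ℕ) (q : ℝ) :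
    q ^ 2 * ∑ s ∈ range (N + 1),
        binPMF N q s * (log (s + 1 + (1 + n) / 2) - log (s + (1 + n) / 2)) =
      (bernsteinSum (N + 2) fun z => fallingLogGap ((n - 1) / 2) z).eval q /
        ((N + 2) * (N + 1)) := by
  rw [eq_div_iff (by positivity), mul_comm, eval_bernsteinSum]
  refine sq_mul_sum_binPMF_eq N q (by simp [fallingLogGap]) (by simp [fallingLogGap])
    fun s => ?_
  simp only [fallingLogGap]
  push_cast
  ring_nf

lemma ConvexOn.card_mul_map_mean_le_sum {ι : Type*} [Fintype ι] [Nonempty ι] {s : Set ℝ}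
    {f : ℝ → ℝ} (hf : ConvexOn ℝ s f) {x : ι → ℝ} (hx : ∀ i, x i ∈ s) :
    Fintype.card ι * f ((∑ i, x i) / Fintype.card ι) ≤ ∑ i, f (x i) := by
  have hcard : (0 : ℝ) < Fintype.card ι := by exact_mod_cast Fintype.card_pos
  have := hf.map_sum_le (t := univ) (w := fun _ => (Fintype.card ι : ℝ)⁻¹) (p := x)
    (fun _ _ => by positivity) (by simp [hcard.ne']) fun i _ => hx i
  simp only [smul_eq_mul, inv_mul_eq_div, ← sum_div] at this
  rw [← le_div_iff₀' hcard]
  linarith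

lemma sum_piAntidiag_multinomial_mul_apply_sum {κ : Type*} [Fintype κ] [DecidableEq κ]
    (S : Finset κ) (f : κ → ℝ) (F : ℕ → ℝ) (N : ℕ) :
    ∑ k ∈ piAntidiag univ N,
        (Nat.multinomial univ k : ℝ) * (∏ j, f j ^ k j) * F (∑ j ∈ S, k j) =
      ∑ s ∈ range (N + 1),
        (N.choose s : ℝ) * (∑ j ∈ S, f j) ^ s * (∑ j ∈ Sᶜ, f j) ^ (N - s) * F s := by
  -- Apply the linear functional `X ^ s ↦ F s` to two expansions of `(A X + B) ^ N`.
  let T : ℝ[X] →ₗ[ℝ] ℝ := lsum fun s => LinearMap.id.smulRight (F s)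
  have hT (s : ℕ) (c : ℝ) : T (monomial s c) = c * F s := by
    simp [T, lsum_apply, sum_monomial_index]
  have hlin : C (∑ j ∈ S, f j) * X + C (∑ j ∈ Sᶜ, f j) =
      ∑ j, C (f j) * X ^ (if j ∈ S then 1 else 0) := by
    rw [← sum_add_sum_compl S]
    simp only [map_sum, sum_mul]
    congr 1
    · exact sum_congr rfl fun j hj => by simp [hj]
    · exact sum_congr rfl fun j hj => by simp [mem_compl.1 hj]
  have hmultinomial : (C (∑ j ∈ S, f j) * X + C (∑ j ∈ Sᶜ, f j)) ^ N =
      ∑ k ∈ piAntidiag univ N,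
        monomial (∑ j ∈ S, k j) ((Nat.multinomial univ k : ℝ) * ∏ j, f j ^ k j) := by
    rw [hlin, sum_pow_eq_sum_piAntidiag]
    refine sum_congr rfl fun k _ => ?_
    simp only [mul_pow, prod_mul_distrib, ← pow_mul, prod_pow_eq_pow_sum, ← map_pow, ← map_prod,
      ite_mul, one_mul, zero_mul, sum_ite_mem, univ_inter]
    rw [← C_mul_X_pow_eq_monomial, map_mul, map_natCast]
    ring
  have hbinomial : (C (∑ j ∈ S, f j) * X + C (∑ j ∈ Sᶜ, f j)) ^ N =
      ∑ s ∈ range (N + 1),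
        monomial s ((N.choose s : ℝ) * (∑ j ∈ S, f j) ^ s * (∑ j ∈ Sᶜ, f j) ^ (N - s)) := by
    rw [add_pow]
    refine sum_congr rfl fun s _ => ?_
    rw [← C_mul_X_pow_eq_monomial]
    simp only [mul_pow, map_mul, map_pow, map_natCast]
    ring
  simpa only [map_sum, hT] using congrArg T (hmultinomial.symm.trans hbinomial)

lemma sum_suppX_eq_sum_piAntidiag (m n N : ℕ) (G : (Fin (m+1) × Fin (n+1) → ℕ) → ℝ) :
    ∑ x ∈ suppX m n N, G (fun ab => x ab.1 ab.2) = ∑ k ∈ piAntidiag univ N, G k := by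
  have hle {k : Fin (m+1) × Fin (n+1) → ℕ} (hk : k ∈ piAntidiag univ N) (ab) : k ab ≤ N :=
    (mem_piAntidiag.1 hk).1 ▸ single_le_sum (fun _ _ => Nat.zero_le _) (mem_univ ab)
  refine sum_bij' (fun x _ ab => x ab.1 ab.2) (fun k _ a b => ⟨min (k (a, b)) N, by omega⟩)
    (fun x hx => ?_) (fun k hk => ?_) (fun x _ => ?_) (fun k hk => ?_) fun _ _ => rfl
  · simpa [suppX, Fintype.sum_prod_type] using hx
  · simpa [suppX, Fintype.sum_prod_type, min_eq_left (hle hk _)] using (mem_piAntidiag.1 hk).1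
  · ext a b
    simp [(x a b).is_le]
  · ext ab
    simp [min_eq_left (hle hk _)]

lemma sum_suppX_wX_mul_rowSum {m n N : ℕ} (p : Fin (m+1) → Fin (n+1) → ℝ)
    (hsum : ∑ i, ∑ j, p i j = 1) (i : Fin (m+1)) (F : ℕ → ℝ) :
    ∑ x ∈ suppX m n N, wX p x * F (∑ j, (x i j : ℕ)) =
      ∑ s ∈ range (N + 1), binPMF N (∑ j, p i j) s * F s := by
  set S : Finset (Fin (m+1) × Fin (n+1)) := {i} ×ˢ univ
  have hS : ∑ ab ∈ S, p ab.1 ab.2 = ∑ j, p i j := by simp [S]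
  have hSc : ∑ ab ∈ Sᶜ, p ab.1 ab.2 = 1 - ∑ j, p i j := by
    rw [← hS, ← hsum, ← Fintype.sum_prod_type', ← sum_add_sum_compl S]
    ring
  let G : (Fin (m+1) × Fin (n+1) → ℕ) → ℝ := fun k =>
    (Nat.multinomial univ k : ℝ) * (∏ ab, p ab.1 ab.2 ^ k ab) * F (∑ ab ∈ S, k ab)
  calc ∑ x ∈ suppX m n N, wX p x * F (∑ j, (x i j : ℕ))
      = ∑ x ∈ suppX m n N, G (fun ab => x ab.1 ab.2) := by
        refine sum_congr rfl fun x _ => ?_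
        simp only [G, S, wX, Fintype.prod_prod_type, sum_product, sum_singleton]
    _ = ∑ k ∈ piAntidiag univ N, G k := sum_suppX_eq_sum_piAntidiag m n N G
    _ = ∑ s ∈ range (N + 1), binPMF N (∑ j, p i j) s * F s := by
        rw [sum_piAntidiag_multinomial_mul_apply_sum, hS, hSc]
        rfl

lemma sum_suppY_one (m : ℕ) (G : (Fin (m+1) → Fin 2) → ℝ) :
    ∑ y ∈ suppY m 1, G y = ∑ k, G (Pi.single k 1) := by
  symm
  refine sum_bij (fun k _ => Pi.single k 1) (fun k _ => ?_) (fun k _ k' _ h => ?_)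
    (fun y hy => ?_) fun _ _ => rfl
  · simp [suppY, Pi.single_apply, apply_ite Fin.val]
  · by_contra hkk
    simpa [hkk] using congrFun h k
  · simp only [suppY, mem_filter, mem_univ, true_and] at hy
    obtain ⟨k, -, hk⟩ := exists_ne_zero_of_sum_ne_zero (hy.trans_ne one_ne_zero)
    refine ⟨k, mem_univ k, funext fun i => Fin.ext ?_⟩
    by_cases hik : i = k
    · subst hik
      have := (y i).is_lt
      simp only [Pi.single_eq_same, Fin.val_one]
      omega
    · have hpair : (y i : ℕ) + y k ≤ ∑ i, (y i : ℕ) := (sum_pair hik).symm.le.trans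
        (sum_le_sum_of_subset (f := fun i => (y i : ℕ)) (subset_univ _))
      simp only [Pi.single_eq_of_ne hik, Fin.val_zero]
      omega

lemma wY_single {m n : ℕ} (p : Fin (m+1) → Fin (n+1) → ℝ) (k : Fin (m+1)) :
    wY (N' := 1) p (Pi.single k 1) = ∑ j, p k j := by
  have hval : (fun i => ((Pi.single k (1 : Fin 2) : Fin (m+1) → Fin 2) i : ℕ)) =
      Pi.single k 1 := by
    ext i
    by_cases h : i = k
    · subst h; simp
    · simp [h]
  rw [wY, hval, Nat.multinomial_single, prod_eq_single k (fun i _ hi => by simp [hi]) (by simp)]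
  simp

lemma mul_log_div_sub_mul_log_div (p : ℝ) {d d' : ℝ} (hd : d ≠ 0) (hd' : d' ≠ 0) :
    p * log (p / d) - p * log (p / d') = p * (log d' - log d) := by
  rcases eq_or_ne p 0 with rfl | hp
  · simp
  · rw [log_div hp hd, log_div hp hd']
    ring

lemma entropyLoss_phat_sub_entropyLoss_ptilde {m n N N' : ℕ} (p : Fin (m+1) → Fin (n+1) → ℝ)
    (x : Fin (m+1) → Fin (n+1) → Fin (N+1)) (y : Fin (m+1) → Fin (N'+1)) :
    entropyLoss (phat x y) p - entropyLoss (ptilde x) p =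
      ∑ i, (∑ j, p i j) *
        (log (N + N' + (1 + m) * (1 + n) / 2) - log (N + (1 + m) * (1 + n) / 2) +
          log ((∑ j, (x i j : ℕ) : ℕ) + (1 + n) / 2) -
          log ((∑ j, (x i j : ℕ) : ℕ) + (y i : ℝ) + (1 + n) / 2)) := by
  rw [entropyLoss, entropyLoss, ← sum_sub_distrib]
  refine sum_congr rfl fun i _ => ?_
  rw [← sum_sub_distrib, sum_mul]
  refine sum_congr rfl fun j _ => ?_
  have hu : (0 : ℝ) < (x i j : ℝ) + 1 / 2 := by positivity
  have hrow : (0 : ℝ) < ((∑ j, (x i j : ℕ) : ℕ) : ℝ) + (1 + n) / 2 := by positivity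
  have hrowy : (0 : ℝ) < ((∑ j, (x i j : ℕ) : ℕ) : ℝ) + (y i : ℝ) + (1 + n) / 2 := by positivity
  have hN : (0 : ℝ) < N + (1 + m) * (1 + n) / 2 := by positivity
  have hNN : (0 : ℝ) < N + N' + (1 + m) * (1 + n) / 2 := by positivity
  rw [mul_log_div_sub_mul_log_div _ (by simp only [phat]; positivity)
    (by simp only [ptilde]; positivity), phat, ptilde]
  rw [log_div hu.ne' hN.ne', log_mul (div_pos hrowy hNN).ne' (div_pos hu hrow).ne',
    log_div hrowy.ne' hNN.ne', log_div hu.ne' hrow.ne']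
  ring

lemma entropyLoss_phat_single_sub_entropyLoss_ptilde {m n N : ℕ}
    (p : Fin (m+1) → Fin (n+1) → ℝ) (hsum : ∑ i, ∑ j, p i j = 1)
    (x : Fin (m+1) → Fin (n+1) → Fin (N+1)) (k : Fin (m+1)) :
    entropyLoss (phat x (Pi.single k (1 : Fin 2))) p - entropyLoss (ptilde x) p =
      log (N + 1 + (1 + m) * (1 + n) / 2) - log (N + (1 + m) * (1 + n) / 2) -
        (∑ j, p k j) * (log ((∑ j, (x k j : ℕ) : ℕ) + 1 + (1 + n) / 2) -
          log ((∑ j, (x k j : ℕ) : ℕ) + (1 + n) / 2)) := by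
  set K := log (N + 1 + (1 + m) * (1 + n) / 2) - log (N + (1 + m) * (1 + n) / 2)
  set D := log ((∑ j, (x k j : ℕ) : ℕ) + 1 + (1 + n) / 2) -
    log ((∑ j, (x k j : ℕ) : ℕ) + (1 + n) / 2)
  have hterm (i : Fin (m+1)) :
      (∑ j, p i j) * (log (N + ((1 : ℕ) : ℝ) + (1 + m) * (1 + n) / 2) -
        log (N + (1 + m) * (1 + n) / 2) + log ((∑ j, (x i j : ℕ) : ℕ) + (1 + n) / 2) -
        log ((∑ j, (x i j : ℕ) : ℕ) + (((Pi.single k 1 : Fin (m+1) → Fin 2) i : ℕ) : ℝ) +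
          (1 + n) / 2)) =
      (∑ j, p i j) * K + if i = k then -((∑ j, p k j) * D) else 0 := by
    by_cases hik : i = k
    · subst hik
      simp only [Nat.cast_one, Pi.single_eq_same, Fin.val_one, if_pos, K, D]
      ring
    · simp [K, hik]
  rw [entropyLoss_phat_sub_entropyLoss_ptilde, sum_congr rfl fun i _ => hterm i,
    sum_add_distrib, ← sum_mul, hsum, sum_ite_eq', if_pos (mem_univ k)]
  ring

lemma riskDiff_one_eq {m n N : ℕ} (p : Fin (m+1) → Fin (n+1) → ℝ)
    (hsum : ∑ i, ∑ j, p i j = 1) :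
    riskDiff m n p N 1 =
      log (N + 1 + (1 + m) * (1 + n) / 2) - log (N + (1 + m) * (1 + n) / 2) -
        ∑ i, (∑ j, p i j) ^ 2 * ∑ s ∈ range (N + 1),
          binPMF N (∑ j, p i j) s * (log (s + 1 + (1 + n) / 2) - log (s + (1 + n) / 2)) := by
  set K := log (N + 1 + (1 + m) * (1 + n) / 2) - log (N + (1 + m) * (1 + n) / 2)
  set ℓ : ℕ → ℝ := fun s => log (s + 1 + (1 + n) / 2) - log (s + (1 + n) / 2)
  have hy (x : Fin (m+1) → Fin (n+1) → Fin (N+1)) :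
      ∑ y ∈ suppY m 1, wY p y * (entropyLoss (phat x y) p - entropyLoss (ptilde x) p) =
        K - ∑ k, (∑ j, p k j) ^ 2 * ℓ (∑ j, (x k j : ℕ)) := by
    rw [sum_suppY_one]
    simp only [wY_single, entropyLoss_phat_single_sub_entropyLoss_ptilde p hsum, K, ℓ, mul_sub,
      sum_sub_distrib, ← sum_mul, hsum, one_mul, sq, mul_assoc]
  have hmass : ∑ x ∈ suppX m n N, wX p x = 1 := by
    simpa [sum_binPMF] using sum_suppX_wX_mul_rowSum (N := N) p hsum 0 fun _ => 1
  calc riskDiff m n p N 1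
      = ∑ x ∈ suppX m n N, wX p x * (K - ∑ k, (∑ j, p k j) ^ 2 * ℓ (∑ j, (x k j : ℕ))) := by
        simp only [riskDiff, mul_assoc, ← mul_sum, hy]
    _ = K * ∑ x ∈ suppX m n N, wX p x -
          ∑ k, (∑ j, p k j) ^ 2 * ∑ x ∈ suppX m n N, wX p x * ℓ (∑ j, (x k j : ℕ)) := by
        simp only [mul_sub, sum_sub_distrib, mul_sum]
        rw [sum_comm]
        congr 1
        · exact sum_congr rfl fun _ _ => mul_comm _ _
        · exact sum_congr rfl fun _ _ => sum_congr rfl fun _ _ => mul_left_comm _ _ _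
    _ = _ := by simp only [hmass, sum_suppX_wX_mul_rowSum p hsum, mul_one]; rfl

lemma sum_uniform_row (m n : ℕ) :
    ∑ _j : Fin (n+1), 1 / ((1 + (m : ℝ)) * (1 + (n : ℝ))) = 1 / (1 + m) := by
  simp only [sum_const, card_univ, Fintype.card_fin, nsmul_eq_mul]
  push_cast
  field_simp
  ring

theorem risk_difference_maximized_at_uniform_general (m n N : ℕ)
    (hn : 3 ≤ n)
    (p : Fin (m+1) → Fin (n+1) → ℝ) (hp : ∀ i j, 0 < p i j)
    (hsum : ∑ i, ∑ j, p i j = 1) :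
    riskDiff m n p N 1 ≤
      riskDiff m n (fun _ _ => 1 / ((1 + (m : ℝ)) * (1 + (n : ℝ)))) N 1 := by
  have hc : 1 ≤ ((n : ℝ) - 1) / 2 := by
    have : (3 : ℝ) ≤ n := by exact_mod_cast hn
    linarith
  have hconv := convexOn_eval_bernsteinSum N (fun z => fallingLogGap (((n : ℝ) - 1) / 2) z)
    fun z _ => by push_cast; exact two_mul_fallingLogGap_succ_le hc z
  have hrow (i : Fin (m+1)) : ∑ j, p i j ∈ Set.Icc 0 1 :=
    ⟨sum_nonneg fun j _ => (hp i j).le,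
      hsum ▸ single_le_sum (fun i _ => sum_nonneg fun j _ => (hp i j).le) (mem_univ i)⟩
  have hunif_sum : ∑ _i : Fin (m+1), ∑ _j : Fin (n+1),
      1 / ((1 + (m : ℝ)) * (1 + (n : ℝ))) = 1 := by
    simp only [sum_const, card_univ, Fintype.card_fin, nsmul_eq_mul]
    push_cast
    field_simp
    ring
  have hjensen := hconv.card_mul_map_mean_le_sum hrow
  rw [riskDiff_one_eq p hsum, riskDiff_one_eq _ hunif_sum]
  simp only [sq_mul_sum_binPMF_log_sub_log, sum_uniform_row, hsum, Fintype.card_fin] at hjensen ⊢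
  rw [← sum_div, ← sum_div, sum_const, card_univ, Fintype.card_fin, nsmul_eq_mul]
  push_cast at hjensen ⊢
  rw [add_comm 1 (m : ℝ)]
  gcongr

theorem risk_difference_maximized_at_uniform (m n N : ℕ)
    (hm : 1 ≤ m) (hn : 3 ≤ n) (hN : 1 ≤ N)
    (p : Fin (m+1) → Fin (n+1) → ℝ) (hp : ∀ i j, 0 < p i j)
    (hsum : ∑ i, ∑ j, p i j = 1) :
    riskDiff m n p N 1 ≤
      riskDiff m n (fun _ _ => 1 / ((1 + (m : ℝ)) * (1 + (n : ℝ)))) N 1 :=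
  risk_difference_maximized_at_uniform_general m n N hn p hp hsum
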